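/- Let 𝒳 be a separable metrizable space with its Borel σ-algebra and 𝕏 a stochastic process on 𝒳. Then 𝕏 satisfies condition C4 if and only if for every decreasing sequence (A_i)_{i≥1} of measurable subsets of 𝒳 with ∩_i A_i = ∅, one has sup_{p≥0} E[ limsup_{T→∞} (1/T) Σ_{t≤T, t∈𝒯^p} 1_{A_i}(X_t) ] → 0 as i → ∞. -/

import Mathlib

open MeasureTheory Filter Set Topology

noncomputable section

variable {Ω : Type*} [MeasurableSpace Ω] {𝒳 : Type*} [MeasurableSpace 𝒳]

/-- Average number of times `t ∈ 𝒯 ω`, `1 ≤ t ≤ T`, with `X t ω ∈ A`, divided by `T`. -/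
def avgVisit (X : ℕ → Ω → 𝒳) (𝒯 : Ω → Set ℕ) (A : Set 𝒳) (T : ℕ) (ω : Ω) : ℝ :=
  (T : ℝ)⁻¹ * ∑ t ∈ Finset.Icc 1 T,
    ({s : ℕ | s ∈ 𝒯 ω ∧ X s ω ∈ A}.indicator (fun _ => (1 : ℝ)) t)

/-- Limit submeasure `μ̂` of the extended process `(X_t)_{t ∈ 𝒯}`. -/
def limitSubmeasure (X : ℕ → Ω → 𝒳) (𝒯 : Ω → Set ℕ) (A : Set 𝒳) (ω : Ω) : ℝ :=
  Filter.limsup (fun T => avgVisit X 𝒯 A T ω) Filter.atTop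

/-- Condition C1 for the extended process `(X_t)_{t ∈ 𝒯}`. -/
def SatisfiesC1 (P : Measure Ω) (X : ℕ → Ω → 𝒳) (𝒯 : Ω → Set ℕ) : Prop :=
  ∀ A : ℕ → Set 𝒳, (∀ k, MeasurableSet (A k)) → Antitone A → (⋂ k, A k) = ∅ →
    Filter.Tendsto (fun k => ∫ ω, limitSubmeasure X 𝒯 (A k) ω ∂P) Filter.atTop (nhds 0)

/-- `T_i^k = ⌊2^u (1 + v·2^{-i})⌋` where `k = u·2^i + v`, `0 ≤ v < 2^i`. -/
def timeGrid (i k : ℕ) : ℕ :=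
  ⌊(2 : ℝ) ^ (k / 2 ^ i) * (1 + ((k % 2 ^ i : ℕ) : ℝ) / (2 ^ i : ℝ))⌋₊

/-- `𝒯^i`: times of first appearance of the instance within its period at scale `i`. -/
def scaleTimes (X : ℕ → Ω → 𝒳) (i : ℕ) (ω : Ω) : Set ℕ :=
  {t | 1 ≤ t ∧ ∀ k, timeGrid i k ≤ t → t < timeGrid i (k + 1) →
    ∀ t', timeGrid i k ≤ t' → t' < t → X t' ω ≠ X t ω}

/-- Condition C4. -/
def SatisfiesC4 (P : Measure Ω) (X : ℕ → Ω → 𝒳) : Prop :=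
  ∀ A : ℕ → Set 𝒳, (∀ i, MeasurableSet (A i)) → Pairwise (Function.onFun Disjoint A) →
    Filter.Tendsto (fun i => ∫ ω, limitSubmeasure X (scaleTimes X i) (A i) ω ∂P)
      Filter.atTop (nhds 0)

/-- Supremum over `T ≥ T₀` of the average visit counts. -/
def supAvgVisit (X : ℕ → Ω → 𝒳) (𝒯 : Ω → Set ℕ) (A : Set 𝒳) (T₀ : ℕ) (ω : Ω) : ℝ :=
  ⨆ T : {T : ℕ // T₀ ≤ T}, avgVisit X 𝒯 A T ω

/-- Number of sets `A k` visited by the process up to time `T`. -/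
def distinctSetCount (X : ℕ → Ω → 𝒳) (A : ℕ → Set 𝒳) (T : ℕ) (ω : Ω) : ℕ :=
  Set.ncard {k : ℕ | ∃ t, 1 ≤ t ∧ t ≤ T ∧ X t ω ∈ A k}

/-- Condition C2. -/
def SatisfiesC2 (P : Measure Ω) (X : ℕ → Ω → 𝒳) : Prop :=
  ∀ A : ℕ → Set 𝒳, (∀ k, MeasurableSet (A k)) → Pairwise (Function.onFun Disjoint A) →
    ∀ᵐ ω ∂P, Filter.Tendsto (fun T => (distinctSetCount X A T ω : ℝ) / T)
      Filter.atTop (nhds 0)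

/-- Condition C5. -/
def SatisfiesC5 (P : Measure Ω) (X : ℕ → Ω → 𝒳) : Prop :=
  ∃ Ti : ℕ → ℕ, Monotone Ti ∧
    SatisfiesC1 P X (fun ω => ⋃ i, scaleTimes X i ω ∩ {t : ℕ | Ti i ≤ t})

/-- `N_t(x) = Σ_{1 ≤ s ≤ t} 1[X_s = x]`, the occurrence count. -/
def dupCount (X : ℕ → Ω → 𝒳) (t : ℕ) (x : 𝒳) (ω : Ω) : ℕ :=
  Set.ncard {s : ℕ | 1 ≤ s ∧ s ≤ t ∧ X s ω = x}

/-- Condition C8. -/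
def SatisfiesC8 (P : Measure Ω) (X : ℕ → Ω → 𝒳) : Prop :=
  ∃ Ψ : ℕ → ℕ, Monotone Ψ ∧ Filter.Tendsto Ψ Filter.atTop Filter.atTop ∧
    ∀ A : ℕ → Set 𝒳, (∀ i, MeasurableSet (A i)) → Antitone A → (⋂ i, A i) = ∅ →
      Filter.Tendsto (fun i => ∫ ω, Filter.limsup (fun T : ℕ => (T : ℝ)⁻¹ *
          ∑ t ∈ Finset.Icc 1 T,
            ({s : ℕ | X s ω ∈ A i ∧ dupCount X s (X s ω) ω ≤ Ψ T}.indicator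
              (fun _ => (1 : ℝ)) t)) Filter.atTop ∂P)
        Filter.atTop (nhds 0)

/-!
Write `ν_p(A) = E[μ̂_p(A)]` for the expected upper visit density of `A` along the times `𝒯^p`.
It is monotone in `A`, subadditive, and monotone in `p`: each period at scale `p + 1` lies inside
a period at scale `p`, so `𝒯^p ⊆ 𝒯^{p+1}`.

If the `A_i` are disjoint, their tails `⋃_{j ≥ i} A_j` decrease to `∅`, and `ν_i(A_i)` is at most
`sup_p ν_p` of the `i`-th tail; this gives C4 from the supremum condition.

Conversely, assume C4 and `sup_p ν_p(A_i) ≥ ε` for all `i`. If every scale `q` has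
`ν_q(A_i) < ε / 2` for some `i`, a diagonal choice of scales `q_j → ∞` and indices `i_j` gives
disjoint slices `B_j = A_{i_j} \ A_{i_{j+1}}` with `ν_{q_j}(B_j) ≥ ε / 4`. Otherwise some
scale `q₀` has `ν_{q₀}(A_i) ≥ ε / 2` for all `i`, so on an event of positive probability every
`A_i` is visited along `𝒯^{q₀}` with upper density bounded below. Choosing horizons and indices
with summable failure probabilities, on a smaller event of positive probability the `j`-th slice
alone is visited with that density before the `j`-th horizon, for every `j`; hence every infinite
union of slices keeps the density. Splitting the slices into infinitely many disjoint infinite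
families yields disjoint sets `C_q` with `ν_q(C_q) ≥ ν_{q₀}(C_q) ≥ c > 0` for `q ≥ q₀`. Both
cases contradict C4.
-/

open Function
open scoped ENNReal

section Disjointness

variable {α ι κ : Type*}

lemma pairwise_disjoint_biUnion_preimage {B : ι → Set α} (hB : Pairwise (Disjoint on B))
    (f : ι → κ) : Pairwise (Disjoint on fun r : κ => ⋃ j ∈ f ⁻¹' {r}, B j) :=
  fun _ _ hrr' => disjoint_iUnion₂_left.2 fun _ hj => disjoint_iUnion₂_right.2 fun _ hj' =>
    hB fun h => hrr' (hj.symm.trans (h ▸ hj'))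

lemma pairwise_disjoint_sdiff_of_antitone {A : ℕ → Set α} (hA : Antitone A) {s : ℕ → ℕ}
    (hs : Monotone s) : Pairwise (Disjoint on fun j => A (s j) \ A (s (j + 1))) :=
  (pairwise_disjoint_on _).2 fun _ _ hjk => disjoint_left.2 fun _ hx hx' =>
    hx.2 (hA (hs hjk) hx'.1)

end Disjointness

section MeasureLemmas

variable {P : Measure Ω}

lemma tendsto_measure_diff_of_subset_iUnion [IsFiniteMeasure P] {S : Set Ω} {D : ℕ → Set Ω}
    (hS : MeasurableSet S) (hD : ∀ n, MeasurableSet (D n)) (hmono : Monotone D)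
    (hSD : S ⊆ ⋃ n, D n) : Tendsto (fun n => P (S \ D n)) atTop (𝓝 0) := by
  have hempty : ⋂ n, S \ D n = ∅ := by
    rw [← sdiff_iUnion, sdiff_eq_empty]
    exact hSD
  have h := tendsto_measure_iInter_atTop (fun n => (hS.diff (hD n)).nullMeasurableSet)
    (fun _ _ hnm => sdiff_subset_sdiff_right (hmono hnm)) ⟨0, measure_ne_top P _⟩
  rwa [hempty, measure_empty] at h

lemma measure_setOf_forall_le_pos [IsProbabilityMeasure P] {f : ℕ → Ω → ℝ} {δ : ℝ}
    (hf : ∀ i, Measurable (f i)) (hf0 : ∀ i ω, 0 ≤ f i ω) (hf1 : ∀ i ω, f i ω ≤ 1)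
    (hanti : ∀ ω, Antitone fun i => f i ω) (hδ : 0 < δ) (hfδ : ∀ i, δ ≤ ∫ ω, f i ω ∂P) :
    0 < P {ω | ∀ i, δ / 2 ≤ f i ω} := by
  have hlarge : ∀ i, ENNReal.ofReal (δ / 2) ≤ P {ω | δ / 2 ≤ f i ω} := by
    intro i
    have hSm : MeasurableSet {ω | δ / 2 ≤ f i ω} := measurableSet_le measurable_const (hf i)
    have hbound : ∀ ω, f i ω ≤ {ω | δ / 2 ≤ f i ω}.indicator 1 ω + δ / 2 := by
      intro ω
      by_cases hω : δ / 2 ≤ f i ω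
      · rw [indicator_of_mem (show ω ∈ {ω | δ / 2 ≤ f i ω} from hω), Pi.one_apply]
        linarith [hf1 i ω]
      · rw [indicator_of_notMem (show ω ∉ {ω | δ / 2 ≤ f i ω} from hω)]
        linarith
    have hint : ∫ ω, f i ω ∂P ≤ ∫ ω, ({ω | δ / 2 ≤ f i ω}.indicator 1 ω + δ / 2) ∂P :=
      integral_mono ((integrable_const (μ := P) 1).mono' (hf i).aestronglyMeasurable
        (Eventually.of_forall fun ω => by
          rw [Real.norm_eq_abs, abs_of_nonneg (hf0 i ω)]; exact hf1 i ω))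
        (((integrable_const 1).indicator hSm).add (integrable_const (δ / 2))) hbound
    rw [integral_add ((integrable_const 1).indicator hSm) (integrable_const _),
      integral_indicator_one hSm, integral_const, probReal_univ, one_smul] at hint
    exact ENNReal.ofReal_le_of_le_toReal (by rw [← measureReal_def]; linarith [hfδ i])
  rw [ofPred_forall, Antitone.measure_iInter (s := fun i => {ω | δ / 2 ≤ f i ω})
    (fun _ _ hij ω hω => hω.trans (hanti ω hij))
    (fun i => (measurableSet_le measurable_const (hf i)).nullMeasurableSet) ⟨0, measure_ne_top P _⟩]
  exact (ENNReal.ofReal_pos.2 (half_pos hδ)).trans_le (le_iInf hlarge)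

end MeasureLemmas
section VisitFrequency

omit [MeasurableSpace Ω] [MeasurableSpace 𝒳]

variable {X : ℕ → Ω → 𝒳} {𝒯 𝒯' : Ω → Set ℕ} {A A' B : Set 𝒳} {T : ℕ} {ω : Ω}

lemma avgVisit_nonneg : 0 ≤ avgVisit X 𝒯 A T ω :=
  mul_nonneg (by positivity)
    (Finset.sum_nonneg fun _ _ => indicator_nonneg (fun _ _ => zero_le_one) _)

lemma avgVisit_le_one : avgVisit X 𝒯 A T ω ≤ 1 := by
  rcases Nat.eq_zero_or_pos T with rfl | hT
  · simp [avgVisit]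
  rw [avgVisit, inv_mul_le_iff₀ (by exact_mod_cast hT), mul_one]
  calc ∑ t ∈ Finset.Icc 1 T, {s | s ∈ 𝒯 ω ∧ X s ω ∈ A}.indicator (fun _ => (1 : ℝ)) t
      ≤ ∑ _t ∈ Finset.Icc 1 T, (1 : ℝ) :=
        Finset.sum_le_sum fun _ _ => indicator_apply_le' (fun _ => le_rfl) fun _ => zero_le_one
    _ = T := by simp

lemma avgVisit_mono
    (h : ∀ t ∈ Finset.Icc 1 T, t ∈ 𝒯 ω → X t ω ∈ A → t ∈ 𝒯' ω ∧ X t ω ∈ A') :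
    avgVisit X 𝒯 A T ω ≤ avgVisit X 𝒯' A' T ω := by
  refine mul_le_mul_of_nonneg_left (Finset.sum_le_sum fun t ht => ?_) (by positivity)
  refine indicator_apply_le' (fun hs => ?_) fun _ => indicator_nonneg (fun _ _ => zero_le_one) _
  rw [indicator_of_mem (show t ∈ {s | s ∈ 𝒯' ω ∧ X s ω ∈ A'} from h t ht hs.1 hs.2)]

lemma avgVisit_le_add (h : A ⊆ A' ∪ B) :
    avgVisit X 𝒯 A T ω ≤ avgVisit X 𝒯 A' T ω + avgVisit X 𝒯 B T ω := by
  rw [avgVisit, avgVisit, avgVisit, ← mul_add, ← Finset.sum_add_distrib]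
  refine mul_le_mul_of_nonneg_left (Finset.sum_le_sum fun t _ => ?_) (by positivity)
  classical
  simp only [indicator_apply, mem_ofPred_eq]
  split_ifs <;> grind

lemma isBoundedUnder_le_avgVisit :
    IsBoundedUnder (· ≤ ·) atTop fun T => avgVisit X 𝒯 A T ω :=
  isBoundedUnder_of ⟨1, fun _ => avgVisit_le_one⟩

lemma isCoboundedUnder_le_avgVisit :
    IsCoboundedUnder (· ≤ ·) atTop fun T => avgVisit X 𝒯 A T ω :=
  (isBoundedUnder_of ⟨0, fun _ => avgVisit_nonneg⟩).isCoboundedUnder_le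

lemma limitSubmeasure_nonneg : 0 ≤ limitSubmeasure X 𝒯 A ω :=
  le_limsup_of_frequently_le (Frequently.of_forall fun _ => avgVisit_nonneg)
    isBoundedUnder_le_avgVisit

lemma limitSubmeasure_le_one : limitSubmeasure X 𝒯 A ω ≤ 1 :=
  limsup_le_of_le isCoboundedUnder_le_avgVisit (Eventually.of_forall fun _ => avgVisit_le_one)

lemma limitSubmeasure_mono (h : ∀ t, t ∈ 𝒯 ω → X t ω ∈ A → t ∈ 𝒯' ω ∧ X t ω ∈ A') :
    limitSubmeasure X 𝒯 A ω ≤ limitSubmeasure X 𝒯' A' ω :=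
  limsup_le_limsup (Eventually.of_forall fun _ => avgVisit_mono fun t _ => h t)
    isCoboundedUnder_le_avgVisit isBoundedUnder_le_avgVisit

lemma limitSubmeasure_le_add (h : A ⊆ A' ∪ B) :
    limitSubmeasure X 𝒯 A ω ≤ limitSubmeasure X 𝒯 A' ω + limitSubmeasure X 𝒯 B ω :=
  (limsup_le_limsup (Eventually.of_forall fun _ => avgVisit_le_add h)
    isCoboundedUnder_le_avgVisit
    (isBoundedUnder_of ⟨1 + 1, fun _ => add_le_add avgVisit_le_one avgVisit_le_one⟩)).trans
  (limsup_add_le (isBoundedUnder_of ⟨0, fun _ => avgVisit_nonneg⟩) isBoundedUnder_le_avgVisit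
    isCoboundedUnder_le_avgVisit isBoundedUnder_le_avgVisit)

lemma le_limitSubmeasure_of_frequently {c : ℝ}
    (h : ∀ N, ∃ T, N ≤ T ∧ c ≤ avgVisit X 𝒯 A T ω) : c ≤ limitSubmeasure X 𝒯 A ω :=
  le_limsup_of_frequently_le (frequently_atTop.2 h) isBoundedUnder_le_avgVisit

end VisitFrequency

section TimeGrid

omit [MeasurableSpace Ω] [MeasurableSpace 𝒳]

lemma timeGrid_two_mul (i k : ℕ) : timeGrid (i + 1) (2 * k) = timeGrid i k := by
  have hdiv : 2 * k / 2 ^ (i + 1) = k / 2 ^ i := by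
    rw [pow_succ', Nat.mul_div_mul_left _ _ two_pos]
  have hmod : 2 * k % 2 ^ (i + 1) = 2 * (k % 2 ^ i) := by
    rw [pow_succ', Nat.mul_mod_mul_left]
  rw [timeGrid, timeGrid, hdiv, hmod]
  congr 2
  push_cast
  rw [pow_succ', mul_div_mul_left _ _ two_ne_zero]

lemma timeGrid_mono (i : ℕ) : Monotone (timeGrid i) := by
  refine monotone_nat_of_le_succ fun k => Nat.floor_mono ?_
  have hm : (0 : ℝ) < 2 ^ i := by positivity
  have hk := Nat.div_add_mod k (2 ^ i)
  have hk' := Nat.div_add_mod (k + 1) (2 ^ i)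
  have hlt := Nat.mod_lt k (pow_pos two_pos i)
  rw [Nat.succ_div] at hk' ⊢
  split_ifs at hk' ⊢ with hdvd
  · -- `k` is the last index of its block: the grid point moves to the next power of two
    rw [Nat.mod_eq_zero_of_dvd hdvd, pow_succ]
    have : ((k % 2 ^ i : ℕ) : ℝ) / 2 ^ i ≤ 1 :=
      (div_le_one hm).2 (by exact_mod_cast hlt.le)
    push_cast
    rw [zero_div, add_zero, mul_one]
    nlinarith [pow_pos (two_pos (α := ℝ)) (k / 2 ^ i)]
  · rw [add_zero] at hk' ⊢
    have hmod : (k + 1) % 2 ^ i = k % 2 ^ i + 1 := by omega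
    rw [hmod]
    gcongr
    linarith

lemma scaleTimes_mono (X : ℕ → Ω → 𝒳) (ω : Ω) : Monotone fun i => scaleTimes X i ω := by
  refine monotone_nat_of_le_succ fun i t ⟨ht, hfirst⟩ => ⟨ht, fun k hk hk' t' ht' htt' => ?_⟩
  -- the period `k` at scale `i + 1` lies inside the period `k / 2` at scale `i`
  refine hfirst (k / 2) ?_ ?_ t' ?_ htt'
  · calc timeGrid i (k / 2) = timeGrid (i + 1) (2 * (k / 2)) := (timeGrid_two_mul _ _).symm
      _ ≤ timeGrid (i + 1) k := timeGrid_mono _ (Nat.mul_div_le k 2)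
      _ ≤ t := hk
  · calc t < timeGrid (i + 1) (k + 1) := hk'
      _ ≤ timeGrid (i + 1) (2 * (k / 2 + 1)) := timeGrid_mono _ (by omega)
      _ = timeGrid i (k / 2 + 1) := timeGrid_two_mul _ _
  · calc timeGrid i (k / 2) = timeGrid (i + 1) (2 * (k / 2)) := (timeGrid_two_mul _ _).symm
      _ ≤ timeGrid (i + 1) k := timeGrid_mono _ (Nat.mul_div_le k 2)
      _ ≤ t' := ht'

end TimeGrid

section Measurability

variable {X : ℕ → Ω → 𝒳} {𝒯 : Ω → Set ℕ} {A : Set 𝒳}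

lemma measurable_avgVisit (hX : ∀ t, Measurable (X t))
    (h𝒯 : ∀ t, MeasurableSet {ω | t ∈ 𝒯 ω}) (hA : MeasurableSet A) (T : ℕ) :
    Measurable (avgVisit X 𝒯 A T) := by
  refine Measurable.const_mul (Finset.measurable_sum _ fun t _ => ?_) _
  exact (measurable_const.indicator ((h𝒯 t).inter (hX t hA)) :
    Measurable ({ω | t ∈ 𝒯 ω ∧ X t ω ∈ A}.indicator fun _ => (1 : ℝ)))

lemma measurable_limitSubmeasure (hX : ∀ t, Measurable (X t))
    (h𝒯 : ∀ t, MeasurableSet {ω | t ∈ 𝒯 ω}) (hA : MeasurableSet A) :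
    Measurable (limitSubmeasure X 𝒯 A) :=
  .limsup (measurable_avgVisit hX h𝒯 hA)

lemma integrable_limitSubmeasure (P : Measure Ω) [IsFiniteMeasure P]
    (hX : ∀ t, Measurable (X t)) (h𝒯 : ∀ t, MeasurableSet {ω | t ∈ 𝒯 ω})
    (hA : MeasurableSet A) : Integrable (limitSubmeasure X 𝒯 A) P :=
  (integrable_const (1 : ℝ)).mono' (measurable_limitSubmeasure hX h𝒯 hA).aestronglyMeasurable
    (Eventually.of_forall fun _ => by
      rw [Real.norm_eq_abs, abs_of_nonneg limitSubmeasure_nonneg]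
      exact limitSubmeasure_le_one)

lemma measurableSet_mem_scaleTimes [TopologicalSpace 𝒳] [TopologicalSpace.SeparableSpace 𝒳]
    [TopologicalSpace.MetrizableSpace 𝒳] [BorelSpace 𝒳] (hX : ∀ t, Measurable (X t))
    (i t : ℕ) : MeasurableSet {ω | t ∈ scaleTimes X i ω} := by
  let := TopologicalSpace.pseudoMetrizableSpacePseudoMetric 𝒳
  have : SecondCountableTopology 𝒳 := UniformSpace.secondCountable_of_separable 𝒳
  have hdiag : ∀ t', Measurable fun ω => X t' ω = X t ω := fun t' =>
    measurableSet_setOfPred.1 (measurableSet_eq_fun (hX t') (hX t))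
  exact measurableSet_setOfPred.2 (by unfold scaleTimes; fun_prop)

end Measurability

section Expectation

variable (P : Measure Ω) {X : ℕ → Ω → 𝒳} {𝒯 𝒯' : Ω → Set ℕ}
  {A A' B : Set 𝒳}

omit [MeasurableSpace 𝒳] in
lemma integral_limitSubmeasure_nonneg : 0 ≤ ∫ ω, limitSubmeasure X 𝒯 A ω ∂P :=
  integral_nonneg fun _ => limitSubmeasure_nonneg

omit [MeasurableSpace 𝒳] in
lemma integral_limitSubmeasure_le_measureReal_univ [IsFiniteMeasure P] :
    ∫ ω, limitSubmeasure X 𝒯 A ω ∂P ≤ P.real univ := by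
  simpa using integral_mono_of_nonneg (Eventually.of_forall fun _ => limitSubmeasure_nonneg)
    (integrable_const (1 : ℝ) (μ := P)) (Eventually.of_forall fun ω => limitSubmeasure_le_one)

omit [MeasurableSpace 𝒳] in
lemma bddAbove_range_integral_limitSubmeasure [IsFiniteMeasure P] (𝒯 : ℕ → Ω → Set ℕ) :
    BddAbove (range fun p => ∫ ω, limitSubmeasure X (𝒯 p) A ω ∂P) :=
  ⟨P.real univ, forall_mem_range.2 fun _ => integral_limitSubmeasure_le_measureReal_univ P⟩

lemma integral_limitSubmeasure_mono [IsFiniteMeasure P] (hX : ∀ t, Measurable (X t))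
    (h𝒯 : ∀ t, MeasurableSet {ω | t ∈ 𝒯 ω}) (h𝒯' : ∀ t, MeasurableSet {ω | t ∈ 𝒯' ω})
    (hA : MeasurableSet A) (hA' : MeasurableSet A') (h𝒯𝒯' : ∀ ω, 𝒯 ω ⊆ 𝒯' ω)
    (hAA' : A ⊆ A') :
    ∫ ω, limitSubmeasure X 𝒯 A ω ∂P ≤ ∫ ω, limitSubmeasure X 𝒯' A' ω ∂P :=
  integral_mono (integrable_limitSubmeasure P hX h𝒯 hA) (integrable_limitSubmeasure P hX h𝒯' hA')
    fun ω => limitSubmeasure_mono fun _ ht hx => ⟨h𝒯𝒯' ω ht, hAA' hx⟩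

lemma integral_limitSubmeasure_le_add [IsFiniteMeasure P] (hX : ∀ t, Measurable (X t))
    (h𝒯 : ∀ t, MeasurableSet {ω | t ∈ 𝒯 ω}) (hA : MeasurableSet A)
    (hA' : MeasurableSet A') (hB : MeasurableSet B) (h : A ⊆ A' ∪ B) :
    ∫ ω, limitSubmeasure X 𝒯 A ω ∂P ≤
      ∫ ω, limitSubmeasure X 𝒯 A' ω ∂P + ∫ ω, limitSubmeasure X 𝒯 B ω ∂P := by
  have hA'i := integrable_limitSubmeasure P hX h𝒯 hA'
  have hBi := integrable_limitSubmeasure P hX h𝒯 hB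
  rw [← integral_add hA'i hBi]
  exact integral_mono (integrable_limitSubmeasure P hX h𝒯 hA) (hA'i.add hBi)
    fun _ => limitSubmeasure_le_add h

end Expectation

section Slices

variable {P : Measure Ω} [IsFiniteMeasure P] {X : ℕ → Ω → 𝒳} {𝒯 : Ω → Set ℕ}
  {A : ℕ → Set 𝒳} {S : Set Ω} {c : ℝ}

lemma exists_horizon_measure_lt (hX : ∀ t, Measurable (X t))
    (h𝒯 : ∀ t, MeasurableSet {ω | t ∈ 𝒯 ω}) (hA : ∀ i, MeasurableSet (A i))
    (hAnti : Antitone A) (hAempty : ⋂ i, A i = ∅) (hS : MeasurableSet S)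
    (hSc : ∀ ω ∈ S, ∀ i, c < limitSubmeasure X 𝒯 (A i) ω) (i N : ℕ) {η : ℝ≥0∞} (hη : 0 < η) :
    ∃ Tb i', i < i' ∧ P (S \ {ω | (∃ T, N ≤ T ∧ T ≤ Tb ∧ c < avgVisit X 𝒯 (A i) T ω) ∧
      ∀ t ≤ Tb, X t ω ∉ A i'}) < η := by
  set Hit : ℕ → Set Ω := fun Tb => {ω | ∃ T, N ≤ T ∧ T ≤ Tb ∧ c < avgVisit X 𝒯 (A i) T ω}
  have hHit : Tendsto (fun Tb => P (S \ Hit Tb)) atTop (𝓝 0) := by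
    refine tendsto_measure_diff_of_subset_iUnion hS (fun Tb => ?_)
      (fun _ _ hab _ ⟨T, hNT, hTb, hc⟩ => ⟨T, hNT, hTb.trans hab, hc⟩) fun ω hω => ?_
    · have := measurable_avgVisit hX h𝒯 (hA i)
      exact measurableSet_setOfPred.2 (by fun_prop)
    · obtain ⟨T, hNT, hc⟩ := (frequently_lt_of_lt_limsup isCoboundedUnder_le_avgVisit
        (hSc ω hω i)).forall_exists_of_atTop N
      exact mem_iUnion.2 ⟨T, T, hNT, le_rfl, hc⟩
  obtain ⟨Tb, hTb⟩ := (hHit.eventually (gt_mem_nhds (ENNReal.half_pos hη.ne'))).exists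
  set Avoid : ℕ → Set Ω := fun i' => {ω | ∀ t ≤ Tb, X t ω ∉ A i'}
  have hAvoid : Tendsto (fun i' => P (S \ Avoid i')) atTop (𝓝 0) := by
    refine tendsto_measure_diff_of_subset_iUnion hS (fun i' => ?_)
      (fun _ _ hab _ hω t ht hx => hω t ht (hAnti hab hx)) fun ω _ => ?_
    · have : ∀ t, Measurable fun ω => X t ω ∈ A i' := fun t =>
        measurableSet_setOfPred.1 (hX t (hA i'))
      exact measurableSet_setOfPred.2 (by fun_prop)
    · have hleave : ∀ t ∈ Finset.range (Tb + 1), ∀ᶠ i' in atTop, X t ω ∉ A i' := by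
        intro t _
        obtain ⟨i₀, hi₀⟩ : ∃ i₀, X t ω ∉ A i₀ := by
          by_contra! h
          exact (hAempty ▸ mem_iInter.2 h : X t ω ∈ (∅ : Set 𝒳))
        exact eventually_atTop.2 ⟨i₀, fun _ hi hx => hi₀ (hAnti hi hx)⟩
      obtain ⟨i', hi'⟩ := ((eventually_all_finset _).2 hleave).exists
      exact mem_iUnion.2 ⟨i', fun t ht => hi' t (Finset.mem_range.2 (Nat.lt_succ_of_le ht))⟩
  obtain ⟨i', hAv, hi'⟩ := ((hAvoid.eventually (gt_mem_nhds (ENNReal.half_pos hη.ne'))).and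
    (eventually_gt_atTop i)).exists
  refine ⟨Tb, i', hi', ?_⟩
  calc P (S \ (Hit Tb ∩ Avoid i')) ≤ P (S \ Hit Tb) + P (S \ Avoid i') := by
        rw [sdiff_inter]; exact measure_union_le _ _
    _ < η / 2 + η / 2 := ENNReal.add_lt_add hTb hAv
    _ = η := ENNReal.add_halves η

lemma exists_slices (hX : ∀ t, Measurable (X t)) (h𝒯 : ∀ t, MeasurableSet {ω | t ∈ 𝒯 ω})
    (hA : ∀ i, MeasurableSet (A i)) (hAnti : Antitone A) (hAempty : ⋂ i, A i = ∅)
    (hS : MeasurableSet S) (hS0 : 0 < P S)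
    (hSc : ∀ ω ∈ S, ∀ i, c < limitSubmeasure X 𝒯 (A i) ω) :
    ∃ s : ℕ → ℕ, StrictMono s ∧ ∃ G : Set Ω, 0 < P G ∧
      ∀ ω ∈ G, ∀ j, ∃ T, j ≤ T ∧ c < avgVisit X 𝒯 (A (s j) \ A (s (j + 1))) T ω := by
  obtain ⟨η, hη0, hηS⟩ := ENNReal.exists_pos_sum_of_countable hS0.ne' ℕ
  choose Tb next hnext hbad using fun j i =>
    exists_horizon_measure_lt (P := P) hX h𝒯 hA hAnti hAempty hS hSc i j (ENNReal.coe_pos.2 (hη0 j))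
  let s : ℕ → ℕ := fun j => Nat.rec 0 next j
  set E : ℕ → Set Ω := fun j => {ω | (∃ T, j ≤ T ∧ T ≤ Tb j (s j) ∧
    c < avgVisit X 𝒯 (A (s j)) T ω) ∧ ∀ t ≤ Tb j (s j), X t ω ∉ A (s (j + 1))}
  set G := S ∩ ⋂ j, E j
  have hbadG : P (S \ G) < P S :=
    calc P (S \ G) = P (⋃ j, S \ E j) := by rw [sdiff_self_inter, sdiff_iInter]
      _ ≤ ∑' j, P (S \ E j) := measure_iUnion_le _
      _ ≤ ∑' j, (η j : ℝ≥0∞) := ENNReal.tsum_le_tsum fun j => (hbad j (s j)).le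
      _ < P S := hηS
  refine ⟨s, strictMono_nat_of_lt_succ fun j => hnext j (s j), G, ?_, fun ω hω j => ?_⟩
  · refine pos_iff_ne_zero.2 fun hG0 => hbadG.not_ge ?_
    calc P S = P S - P G := by rw [hG0, tsub_zero]
      _ ≤ P (S \ G) := le_measure_sdiff
  · obtain ⟨⟨T, hjT, hTb, hc⟩, havoid⟩ := mem_iInter.1 hω.2 j
    exact ⟨T, hjT, hc.trans_le (avgVisit_mono fun t ht ht𝒯 hx =>
      ⟨ht𝒯, hx, havoid t ((Finset.mem_Icc.1 ht).2.trans hTb)⟩)⟩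

lemma exists_pairwise_disjoint_le_integral [IsProbabilityMeasure P]
    (hX : ∀ t, Measurable (X t)) (h𝒯 : ∀ t, MeasurableSet {ω | t ∈ 𝒯 ω})
    (hA : ∀ i, MeasurableSet (A i)) (hAnti : Antitone A) (hAempty : ⋂ i, A i = ∅) {δ : ℝ}
    (hδ : 0 < δ)
    (hAδ : ∀ i, δ ≤ ∫ ω, limitSubmeasure X 𝒯 (A i) ω ∂P) :
    ∃ C : ℕ → Set 𝒳, (∀ r, MeasurableSet (C r)) ∧ Pairwise (Disjoint on C) ∧
      ∃ c > 0, ∀ r, c ≤ ∫ ω, limitSubmeasure X 𝒯 (C r) ω ∂P := by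
  have hS0 := measure_setOf_forall_le_pos (fun i => measurable_limitSubmeasure hX h𝒯 (hA i))
    (fun _ _ => limitSubmeasure_nonneg) (fun _ _ => limitSubmeasure_le_one)
    (fun _ _ _ hij => limitSubmeasure_mono fun _ ht hx => ⟨ht, hAnti hij hx⟩) hδ hAδ
  have hS : MeasurableSet {ω | ∀ i, δ / 2 ≤ limitSubmeasure X 𝒯 (A i) ω} := by
    have := fun i => measurable_limitSubmeasure hX h𝒯 (hA i)
    exact measurableSet_setOfPred.2 (by fun_prop)
  obtain ⟨s, hs, G, hG0, hG⟩ := exists_slices hX h𝒯 hA hAnti hAempty hS hS0 (c := δ / 4)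
    fun ω hω i => by linarith [(hω : ∀ i, _) i]
  -- the `r`-th set gathers the slices indexed by `Nat.pair r N`, `N ∈ ℕ`
  set C : ℕ → Set 𝒳 := fun r => ⋃ j ∈ (fun j => (Nat.unpair j).1) ⁻¹' {r},
    A (s j) \ A (s (j + 1))
  have hC : ∀ r, MeasurableSet (C r) := fun r =>
    .biUnion (to_countable _) fun j _ => (hA _).diff (hA _)
  have hGC : ∀ r, ∀ ω ∈ G, δ / 4 ≤ limitSubmeasure X 𝒯 (C r) ω := fun r ω hω =>
    le_limitSubmeasure_of_frequently fun N => by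
      obtain ⟨T, hT, hc⟩ := hG ω hω (Nat.pair r N)
      refine ⟨T, (Nat.right_le_pair r N).trans hT, hc.le.trans (avgVisit_mono fun t _ ht hx =>
        ⟨ht, subset_biUnion_of_mem (u := fun j => A (s j) \ A (s (j + 1))) ?_ hx⟩)⟩
      simp
  refine ⟨C, hC,
    pairwise_disjoint_biUnion_preimage (pairwise_disjoint_sdiff_of_antitone hAnti hs.monotone) _,
    δ / 4 * P.real G, mul_pos (by positivity) (ENNReal.toReal_pos hG0.ne' (measure_ne_top P G)),
    fun r => ?_⟩
  calc δ / 4 * P.real G ≤ δ / 4 * P.real {ω | δ / 4 ≤ limitSubmeasure X 𝒯 (C r) ω} :=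
        mul_le_mul_of_nonneg_left (measureReal_mono (hGC r)) (by positivity)
    _ ≤ ∫ ω, limitSubmeasure X 𝒯 (C r) ω ∂P :=
        mul_meas_ge_le_integral_of_nonneg (Eventually.of_forall fun _ => limitSubmeasure_nonneg)
          (integrable_limitSubmeasure P hX h𝒯 (hC r)) _

end Slices

section ConditionC4

variable [TopologicalSpace 𝒳] [TopologicalSpace.SeparableSpace 𝒳]
  [TopologicalSpace.MetrizableSpace 𝒳] [BorelSpace 𝒳] (P : Measure Ω) {X : ℕ → Ω → 𝒳}

lemma integral_limitSubmeasure_scaleTimes_mono [IsFiniteMeasure P]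
    (hX : ∀ t, Measurable (X t)) {A A' : Set 𝒳} (hA : MeasurableSet A)
    (hA' : MeasurableSet A') (hAA' : A ⊆ A') {p q : ℕ} (hpq : p ≤ q) :
    ∫ ω, limitSubmeasure X (scaleTimes X p) A ω ∂P ≤
      ∫ ω, limitSubmeasure X (scaleTimes X q) A' ω ∂P :=
  integral_limitSubmeasure_mono P hX (measurableSet_mem_scaleTimes hX p)
    (measurableSet_mem_scaleTimes hX q) hA hA' (fun ω => scaleTimes_mono X ω hpq) hAA'

lemma not_satisfiesC4_of_le_integral [IsFiniteMeasure P] (hX : ∀ t, Measurable (X t))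
    {B : ℕ → Set 𝒳} (hB : ∀ j, MeasurableSet (B j)) (hBd : Pairwise (Disjoint on B))
    {q : ℕ → ℕ} (hq : Tendsto q atTop atTop) {c : ℝ} (hc : 0 < c)
    (hcB : ∀ j, c ≤ ∫ ω, limitSubmeasure X (scaleTimes X (q j)) (B j) ω ∂P) :
    ¬ SatisfiesC4 P X := by
  intro hC4
  set C : ℕ → Set 𝒳 := fun r => ⋃ j ∈ q ⁻¹' {r}, B j
  have hC : ∀ r, MeasurableSet (C r) := fun r => .biUnion (to_countable _) fun j _ => hB j
  have hlim := (hC4 C hC (pairwise_disjoint_biUnion_preimage hBd q)).comp hq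
  have hcC : ∀ j, c ≤ ∫ ω, limitSubmeasure X (scaleTimes X (q j)) (C (q j)) ω ∂P := fun j =>
    (hcB j).trans (integral_limitSubmeasure_scaleTimes_mono P hX (hB j) (hC _)
      (subset_biUnion_of_mem (u := B) (rfl : q j = q j)) le_rfl)
  exact hc.not_ge (ge_of_tendsto hlim (Eventually.of_forall hcC))

lemma not_satisfiesC4_of_forall_exists_integral_lt [IsFiniteMeasure P]
    (hX : ∀ t, Measurable (X t)) {A : ℕ → Set 𝒳} (hA : ∀ i, MeasurableSet (A i))
    (hAnti : Antitone A) {ε : ℝ} (hε : 0 < ε)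
    (hsup : ∀ i, ε ≤ ⨆ p, ∫ ω, limitSubmeasure X (scaleTimes X p) (A i) ω ∂P)
    (hsmall : ∀ q, ∃ i, ∫ ω, limitSubmeasure X (scaleTimes X q) (A i) ω ∂P < ε / 2) :
    ¬ SatisfiesC4 P X := by
  have hscale : ∀ i, ∃ q, i ≤ q ∧
      3 * ε / 4 < ∫ ω, limitSubmeasure X (scaleTimes X q) (A i) ω ∂P := by
    intro i
    obtain ⟨p, hp⟩ := (lt_ciSup_iff (bddAbove_range_integral_limitSubmeasure P _)).1
      ((by linarith : 3 * ε / 4 < ε).trans_le (hsup i))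
    exact ⟨max p i, le_max_right p i, hp.trans_le
      (integral_limitSubmeasure_scaleTimes_mono P hX (hA i) (hA i) le_rfl (le_max_left p i))⟩
  choose q hiq hq using hscale
  have hnext : ∀ i, ∃ i', i < i' ∧
      ∫ ω, limitSubmeasure X (scaleTimes X (q i)) (A i') ω ∂P < ε / 2 := by
    intro i
    obtain ⟨i', hi'⟩ := hsmall (q i)
    exact ⟨max i' (i + 1), by omega, (integral_limitSubmeasure_scaleTimes_mono P hX (hA _) (hA _)
      (hAnti (le_max_left _ _)) le_rfl).trans_lt hi'⟩
  choose next hnext_gt hnext using hnext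
  set s : ℕ → ℕ := fun j => next^[j] 0
  have hs_succ : ∀ j, s (j + 1) = next (s j) := fun j => Function.iterate_succ_apply' next j 0
  have hs : StrictMono s := strictMono_nat_of_lt_succ fun j => hs_succ j ▸ hnext_gt (s j)
  refine not_satisfiesC4_of_le_integral P hX (fun j => (hA (s j)).diff (hA (s (j + 1))))
    (pairwise_disjoint_sdiff_of_antitone hAnti hs.monotone) (q := q ∘ s)
    (tendsto_atTop_mono (fun j => (hs.id_le j).trans (hiq (s j))) tendsto_id)
    (by positivity : 0 < ε / 4) fun j => ?_
  have hsplit := integral_limitSubmeasure_le_add P hX (measurableSet_mem_scaleTimes hX (q (s j)))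
    (hA (s j)) ((hA (s j)).diff (hA (s (j + 1)))) (hA (s (j + 1))) (subset_sdiff_union _ _)
  rw [hs_succ] at hsplit
  rw [Function.comp_apply, hs_succ]
  linarith [hq (s j), hnext (s j)]

lemma tendsto_iSup_integral_of_satisfiesC4 [IsProbabilityMeasure P]
    (hX : ∀ t, Measurable (X t)) (hC4 : SatisfiesC4 P X) {A : ℕ → Set 𝒳}
    (hA : ∀ i, MeasurableSet (A i)) (hAnti : Antitone A) (hAempty : ⋂ i, A i = ∅) :
    Tendsto (fun i => ⨆ p, ∫ ω, limitSubmeasure X (scaleTimes X p) (A i) ω ∂P) atTop (𝓝 0) := by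
  set u : ℕ → ℝ := fun i => ⨆ p, ∫ ω, limitSubmeasure X (scaleTimes X p) (A i) ω ∂P
  have hbdd := fun i => bddAbove_range_integral_limitSubmeasure P (X := X) (A := A i) (scaleTimes X)
  have hu0 : ∀ i, 0 ≤ u i := fun i =>
    (integral_limitSubmeasure_nonneg P).trans (le_ciSup (hbdd i) 0)
  have hu : Antitone u := fun i i' hii' => ciSup_mono (hbdd i) fun p =>
    integral_limitSubmeasure_scaleTimes_mono P hX (hA i') (hA i) (hAnti hii') le_rfl
  have hlim := tendsto_atTop_ciInf hu ⟨0, forall_mem_range.2 hu0⟩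
  obtain hzero | hpos := (le_ciInf hu0).eq_or_lt
  · rwa [← hzero] at hlim
  set ε := ⨅ i, u i
  have hε : ∀ i, ε ≤ u i := ciInf_le ⟨0, forall_mem_range.2 hu0⟩
  by_cases hfixed : ∃ q₀, ∀ i, ε / 2 ≤ ∫ ω, limitSubmeasure X (scaleTimes X q₀) (A i) ω ∂P
  · obtain ⟨q₀, hq₀⟩ := hfixed
    obtain ⟨C, hC, hCd, c, hc, hcC⟩ := exists_pairwise_disjoint_le_integral hX
      (measurableSet_mem_scaleTimes hX q₀) hA hAnti hAempty (half_pos hpos) hq₀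
    refine absurd hC4 (not_satisfiesC4_of_le_integral P hX hC hCd
      (tendsto_atTop_mono (fun j => Nat.le_add_left j q₀) tendsto_id) hc fun j => ?_)
    exact (hcC j).trans (integral_limitSubmeasure_scaleTimes_mono P hX (hC j) (hC j) le_rfl
      (Nat.le_add_right q₀ j))
  · push Not at hfixed
    exact absurd hC4 (not_satisfiesC4_of_forall_exists_integral_lt P hX hA hAnti hpos hε hfixed)

lemma satisfiesC4_of_tendsto_iSup_integral [IsFiniteMeasure P]
    (hX : ∀ t, Measurable (X t))
    (h : ∀ A : ℕ → Set 𝒳, (∀ i, MeasurableSet (A i)) → Antitone A → ⋂ i, A i = ∅ →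
      Tendsto (fun i => ⨆ p, ∫ ω, limitSubmeasure X (scaleTimes X p) (A i) ω ∂P) atTop (𝓝 0)) :
    SatisfiesC4 P X := by
  intro A hA hAd
  set B : ℕ → Set 𝒳 := fun i => ⋃ j ≥ i, A j
  have hB : ∀ i, MeasurableSet (B i) := fun i => .biUnion (to_countable _) fun j _ => hA j
  have hBanti : Antitone B := fun _ _ hii' =>
    biUnion_mono (fun _ hj => hii'.trans hj) fun _ _ => le_rfl
  have hBempty : ⋂ i, B i = ∅ := by
    refine eq_empty_of_forall_notMem fun x hx => ?_
    obtain ⟨j, -, hj⟩ := mem_iUnion₂.1 (mem_iInter.1 hx 0)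
    obtain ⟨j', hj', hj'x⟩ := mem_iUnion₂.1 (mem_iInter.1 hx (j + 1))
    exact disjoint_left.1 (hAd (by omega : j ≠ j')) hj hj'x
  refine squeeze_zero (fun i => integral_limitSubmeasure_nonneg P) (fun i => ?_)
    (h B hB hBanti hBempty)
  exact (integral_limitSubmeasure_scaleTimes_mono P hX (hA i) (hB i)
    (subset_biUnion_of_mem (u := A) (le_refl i)) le_rfl).trans
    (le_ciSup (bddAbove_range_integral_limitSubmeasure P (X := X) (A := B i) (scaleTimes X)) i)

end ConditionC4

/-- equivalent characterization of condition C4. -/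
theorem stmt1 [TopologicalSpace 𝒳] [TopologicalSpace.SeparableSpace 𝒳]
    [TopologicalSpace.MetrizableSpace 𝒳] [BorelSpace 𝒳]
    (P : Measure Ω) [IsProbabilityMeasure P]
    (X : ℕ → Ω → 𝒳) (hX : ∀ t, Measurable (X t)) :
    SatisfiesC4 P X ↔
      ∀ A : ℕ → Set 𝒳, (∀ i, MeasurableSet (A i)) → Antitone A → (⋂ i, A i) = ∅ →
        Filter.Tendsto
          (fun i => ⨆ p : ℕ, ∫ ω, limitSubmeasure X (scaleTimes X p) (A i) ω ∂P)
          Filter.atTop (nhds 0) :=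
  ⟨fun hC4 _ hA hAnti hAempty => tendsto_iSup_integral_of_satisfiesC4 P hX hC4 hA hAnti hAempty,
    satisfiesC4_of_tendsto_iSup_integral P hX⟩
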